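/- Let γ be a confidence parameter with 0 < γ < 1 and let X₀ → Y₀, X₁ → Y₁, …, X_k → Y_k be partial implications over [n] with k ≥ 1. If γ < 1/k, then the following are equivalent: (1) X₁ → Y₁, …, X_k → Y_k ⊨_γ X₀ → Y₀; (2) X_i → Y_i ⊨_γ X₀ → Y₀ for some i ∈ [k]; (3) either Y₀ ⊆ X₀, or for some i ∈ [k] both X_i ⊆ X₀ and X₀Y₀ ⊆ X_iY_i. -/

import Mathlib

/-!
A premise Xᵢ → Yᵢ with Xᵢ ⊆ X₀ and X₀Y₀ ⊆ XᵢYᵢ entails X₀ → Y₀ because counts are antitone in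
the itemset. Conversely, if Y₀ ⊄ X₀ and no premise has that form, take `a` copies of X₀, `b`
copies of XᵢYᵢ for every i with Xᵢ ⊆ X₀, and `t` copies of [n]. Then X₀ is covered at least
`a + t` times but X₀Y₀ only `t` times, while every premise is covered at most `a + kb + t` times
(`kb + t` if Xᵢ ⊄ X₀) and witnessed at least `b + t` times (`t` if Xᵢ ⊄ X₀). The resulting
linear constraints on `a, b, t` have a solution in naturals as soon as γk < 1.
-/

open Finset

/-- Number of transactions in the dataset `D` that cover `X`, counted with multiplicity. -/
def cntD {n : ℕ} (D : Multiset (Finset (Fin n))) (X : Finset (Fin n)) : ℕ :=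
  (D.filter (fun Z => X ⊆ Z)).card

/-- `D ⊨_γ X → Y` : either no transaction covers `X`, or the confidence of `X → Y` is ≥ γ. -/
def satPI {n : ℕ} (γ : ℝ) (D : Multiset (Finset (Fin n))) (X Y : Finset (Fin n)) : Prop :=
  cntD D X = 0 ∨ γ * (cntD D X : ℝ) ≤ (cntD D (X ∪ Y) : ℝ)

/-- Entailment at confidence threshold γ from the premises indexed by `L`. -/
def entailsFrom {n k : ℕ} (γ : ℝ) (P : Fin k → Finset (Fin n) × Finset (Fin n))
    (L : Finset (Fin k)) (X₀ Y₀ : Finset (Fin n)) : Prop :=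
  ∀ D : Multiset (Finset (Fin n)),
    (∀ i ∈ L, satPI γ D (P i).1 (P i).2) → satPI γ D X₀ Y₀

/-- Proper entailment from the premises indexed by `L`: the entailment holds,
and it fails from every proper subset of the premises. -/
def properFrom {n k : ℕ} (γ : ℝ) (P : Fin k → Finset (Fin n) × Finset (Fin n))
    (L : Finset (Fin k)) (X₀ Y₀ : Finset (Fin n)) : Prop :=
  entailsFrom γ P L X₀ Y₀ ∧ ∀ L' ⊂ L, ¬ entailsFrom γ P L' X₀ Y₀

/-- The weight `w_Z(X → Y)`: `1-γ` if `Z` witnesses, `-γ` if `Z` violates, `0` otherwise. -/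
noncomputable def wt {n : ℕ} (γ : ℝ) (Z X Y : Finset (Fin n)) : ℝ :=
  if X ∪ Y ⊆ Z then 1 - γ else if X ⊆ Z then -γ else 0

/-- The premises indexed by `L` enforce homogeneity. -/
def homogFrom {n k : ℕ} (P : Fin k → Finset (Fin n) × Finset (Fin n))
    (L : Finset (Fin k)) : Prop :=
  ∀ Z : Finset (Fin n),
    (∀ i ∈ L, ¬ (P i).1 ⊆ Z ∨ (P i).1 ∪ (P i).2 ⊆ Z) →
    ((∀ i ∈ L, ¬ (P i).1 ⊆ Z) ∨ (∀ i ∈ L, (P i).1 ∪ (P i).2 ⊆ Z))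

/-- The critical threshold `γ*({Xᵢ → Yᵢ : i ∈ L}, X)`. -/
noncomputable def gammaStar {n k : ℕ} (P : Fin k → Finset (Fin n) × Finset (Fin n))
    (L : Finset (Fin k)) (X : Finset (Fin n)) : ℝ :=
  sInf { r : ℝ | ∃ lam : Fin k → ℝ, (∀ i ∈ L, 0 ≤ lam i) ∧ (∑ i ∈ L, lam i) = 1 ∧
    r = (Finset.univ.filter (fun Z : Finset (Fin n) => ¬ X ⊆ Z)).fold max 0
          (fun Z => (∑ i ∈ L.filter (fun i => (P i).1 ∪ (P i).2 ⊆ Z), lam i) /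
                    (∑ i ∈ L.filter (fun i => (P i).1 ⊆ Z), lam i)) }

section Counting

variable {n : ℕ}

lemma cntD_add (D₁ D₂ : Multiset (Finset (Fin n))) (X : Finset (Fin n)) :
    cntD (D₁ + D₂) X = cntD D₁ X + cntD D₂ X := by
  simp only [cntD, Multiset.filter_add, Multiset.card_add]

lemma cntD_nsmul (m : ℕ) (D : Multiset (Finset (Fin n))) (X : Finset (Fin n)) :
    cntD (m • D) X = m * cntD D X := by
  simp only [cntD, Multiset.filter_nsmul, Multiset.card_nsmul]

lemma cntD_replicate (m : ℕ) (Z X : Finset (Fin n)) :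
    cntD (Multiset.replicate m Z) X = if X ⊆ Z then m else 0 := by
  unfold cntD
  split_ifs with h
  · rw [Multiset.filter_eq_self.2 fun _ hZ => Multiset.eq_of_mem_replicate hZ ▸ h,
      Multiset.card_replicate]
  · rw [Multiset.filter_eq_nil.2 fun _ hZ => Multiset.eq_of_mem_replicate hZ ▸ h,
      Multiset.card_zero]

lemma cntD_map_val {ι : Type*} (s : Finset ι) (f : ι → Finset (Fin n)) (X : Finset (Fin n)) :
    cntD (s.val.map f) X = #{i ∈ s | X ⊆ f i} := by
  simp only [cntD, Multiset.filter_map, Multiset.card_map]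
  rfl

lemma cntD_antitone (D : Multiset (Finset (Fin n))) : Antitone (cntD D) :=
  fun _ _ hXX' => Multiset.card_le_card <|
    Multiset.monotone_filter_right D fun _ hZ => hXX'.trans hZ

end Counting

section Satisfaction

variable {n : ℕ} {γ : ℝ}

lemma satPI_of_subset (hγ : γ ≤ 1) (D : Multiset (Finset (Fin n))) {X Y : Finset (Fin n)}
    (h : Y ⊆ X) : satPI γ D X Y := by
  right
  rw [union_eq_left.2 h]
  exact mul_le_of_le_one_left (Nat.cast_nonneg _) hγ

lemma satPI.mono (hγ : 0 ≤ γ) {D : Multiset (Finset (Fin n))} {X Y X₀ Y₀ : Finset (Fin n)}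
    (hX : X ⊆ X₀) (hXY : X₀ ∪ Y₀ ⊆ X ∪ Y) (h : satPI γ D X Y) : satPI γ D X₀ Y₀ := by
  have hcX : cntD D X₀ ≤ cntD D X := cntD_antitone D hX
  have hcXY : cntD D (X ∪ Y) ≤ cntD D (X₀ ∪ Y₀) := cntD_antitone D hXY
  rcases h with h | h
  · exact .inl (by omega)
  · right
    calc γ * (cntD D X₀ : ℝ) ≤ γ * cntD D X := by gcongr
      _ ≤ cntD D (X ∪ Y) := h
      _ ≤ cntD D (X₀ ∪ Y₀) := by exact_mod_cast hcXY

lemma entailsFrom.mono {k : ℕ} {P : Fin k → Finset (Fin n) × Finset (Fin n)}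
    {L L' : Finset (Fin k)} {X₀ Y₀ : Finset (Fin n)} (h : entailsFrom γ P L X₀ Y₀)
    (hL : L ⊆ L') : entailsFrom γ P L' X₀ Y₀ :=
  fun D hD => h D fun i hi => hD i (hL hi)

end Satisfaction

lemma exists_countermodel_weights {γ κ : ℝ} (hγ0 : 0 < γ) (hγ1 : γ < 1) (hγκ : γ * κ < 1) :
    ∃ a b t : ℕ, γ * (κ * b + t) ≤ t ∧ γ * (a + κ * b + t) ≤ b + t ∧ t < γ * (a + t) := by
  obtain ⟨b, hb⟩ := exists_nat_gt (1 / (1 - γ * κ))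
  set t := ⌈γ * κ * b / (1 - γ)⌉₊
  set a := ⌊(1 - γ) * t / γ⌋₊ + 1
  have hδ : 0 < 1 - γ * κ := by linarith
  have hγ1' : 0 < 1 - γ := by linarith
  have ht : γ * κ * b ≤ (1 - γ) * t := by
    rw [← div_le_iff₀' hγ1']
    exact Nat.le_ceil _
  have ha : (1 - γ) * t < γ * a := by
    rw [← div_lt_iff₀' hγ0]
    push_cast [a]
    exact Nat.lt_floor_add_one _
  have ha' : γ * a ≤ (1 - γ) * t + γ := by
    have : (⌊(1 - γ) * t / γ⌋₊ : ℝ) ≤ (1 - γ) * t / γ := Nat.floor_le (by positivity)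
    have := (le_div_iff₀' hγ0).1 this
    push_cast [a]
    linarith
  have hb' : γ ≤ (1 - γ * κ) * b := by
    have := (div_lt_iff₀' hδ).1 hb
    linarith
  refine ⟨a, b, t, by linarith, by linarith, by linarith⟩

section Countermodel

variable {n k : ℕ} (P : Fin k → Finset (Fin n) × Finset (Fin n)) (X₀ : Finset (Fin n))

def countermodel (a b t : ℕ) : Multiset (Finset (Fin n)) :=
  Multiset.replicate a X₀ +
    b • (({i | (P i).1 ⊆ X₀} : Finset (Fin k)).val.map fun i => (P i).1 ∪ (P i).2) +
    Multiset.replicate t univ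

lemma cntD_countermodel (a b t : ℕ) (X : Finset (Fin n)) :
    cntD (countermodel P X₀ a b t) X =
      (if X ⊆ X₀ then a else 0) + b * #{i | (P i).1 ⊆ X₀ ∧ X ⊆ (P i).1 ∪ (P i).2} + t := by
  simp only [countermodel, cntD_add, cntD_nsmul, cntD_map_val, cntD_replicate, subset_univ,
    if_true, filter_filter]

variable {X₀} {γ : ℝ} {a b t : ℕ}

lemma satPI_countermodel (hγ : 0 ≤ γ) (hfar : γ * (k * b + t) ≤ t)
    (hnear : γ * (a + k * b + t) ≤ b + t) (i : Fin k) :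
    satPI γ (countermodel P X₀ a b t) (P i).1 (P i).2 := by
  set D := countermodel P X₀ a b t
  have hle : ∀ X, cntD D X ≤ (if X ⊆ X₀ then a else 0) + k * b + t := fun X => by
    rw [cntD_countermodel, mul_comm k]
    gcongr
    exact (card_le_univ _).trans_eq (Fintype.card_fin k)
  right
  by_cases hi : (P i).1 ⊆ X₀
  · have hW : b + t ≤ cntD D ((P i).1 ∪ (P i).2) := by
      rw [cntD_countermodel]
      have : b ≤ b * #{j | (P j).1 ⊆ X₀ ∧ (P i).1 ∪ (P i).2 ⊆ (P j).1 ∪ (P j).2} :=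
        Nat.le_mul_of_pos_right b (card_pos.2 ⟨i, by simp [hi]⟩)
      omega
    have hX := hle (P i).1
    rw [if_pos hi] at hX
    calc γ * (cntD D (P i).1 : ℝ) ≤ γ * (a + k * b + t) := by gcongr; exact_mod_cast hX
      _ ≤ b + t := hnear
      _ ≤ cntD D ((P i).1 ∪ (P i).2) := by exact_mod_cast hW
  · have hW : t ≤ cntD D ((P i).1 ∪ (P i).2) := by
      rw [cntD_countermodel]
      omega
    have hX := hle (P i).1
    rw [if_neg hi, zero_add] at hX
    calc γ * (cntD D (P i).1 : ℝ) ≤ γ * (k * b + t) := by gcongr; exact_mod_cast hX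
      _ ≤ t := hfar
      _ ≤ cntD D ((P i).1 ∪ (P i).2) := by exact_mod_cast hW

lemma not_satPI_countermodel (hγ : 0 ≤ γ) {Y₀ : Finset (Fin n)} (hY : ¬ Y₀ ⊆ X₀)
    (hno : ∀ i, (P i).1 ⊆ X₀ → ¬ X₀ ∪ Y₀ ⊆ (P i).1 ∪ (P i).2) (hviol : t < γ * (a + t)) :
    ¬ satPI γ (countermodel P X₀ a b t) X₀ Y₀ := by
  set D := countermodel P X₀ a b t
  have hXY : cntD D (X₀ ∪ Y₀) = t := by
    rw [cntD_countermodel, if_neg fun h => hY (union_subset_iff.1 h).2,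
      filter_false_of_mem fun i _ h => hno i h.1 h.2, card_empty, mul_zero, zero_add, zero_add]
  have hX : a + t ≤ cntD D X₀ := by
    rw [cntD_countermodel, if_pos subset_rfl]
    omega
  have hX' : (a + t : ℝ) ≤ cntD D X₀ := by exact_mod_cast hX
  have ht : (0 : ℝ) ≤ t := t.cast_nonneg
  rintro (h | h)
  · rw [h, Nat.cast_zero] at hX'
    nlinarith
  · rw [hXY] at h
    nlinarith

end Countermodel

lemma not_entailsFrom_univ {n k : ℕ} {γ : ℝ} (hγ0 : 0 < γ) (hγ1 : γ < 1) (hγk : γ * k < 1)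
    {P : Fin k → Finset (Fin n) × Finset (Fin n)} {X₀ Y₀ : Finset (Fin n)} (hY : ¬ Y₀ ⊆ X₀)
    (hno : ∀ i, (P i).1 ⊆ X₀ → ¬ X₀ ∪ Y₀ ⊆ (P i).1 ∪ (P i).2) :
    ¬ entailsFrom γ P univ X₀ Y₀ := fun hent => by
  obtain ⟨a, b, t, hfar, hnear, hviol⟩ := exists_countermodel_weights hγ0 hγ1 hγk
  exact not_satPI_countermodel P hγ0.le hY hno hviol <|
    hent _ fun i _ => satPI_countermodel P hγ0.le hfar hnear i

theorem stmt11 {n k : ℕ} (γ : ℝ) (hγ0 : 0 < γ) (hγ1 : γ < 1) (hk : 1 ≤ k)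
    (P : Fin k → Finset (Fin n) × Finset (Fin n)) (X₀ Y₀ : Finset (Fin n))
    (hγk : γ < 1 / (k : ℝ)) :
    (entailsFrom γ P Finset.univ X₀ Y₀ ↔
      ∃ i : Fin k, entailsFrom γ P {i} X₀ Y₀) ∧
    (entailsFrom γ P Finset.univ X₀ Y₀ ↔
      (Y₀ ⊆ X₀ ∨ ∃ i : Fin k, (P i).1 ⊆ X₀ ∧ X₀ ∪ Y₀ ⊆ (P i).1 ∪ (P i).2)) := by
  have hγk' : γ * k < 1 := (lt_div_iff₀ (by exact_mod_cast hk)).1 hγk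
  have h13 : entailsFrom γ P univ X₀ Y₀ →
      Y₀ ⊆ X₀ ∨ ∃ i, (P i).1 ⊆ X₀ ∧ X₀ ∪ Y₀ ⊆ (P i).1 ∪ (P i).2 := by
    contrapose!
    rintro ⟨hY, hno⟩
    exact not_entailsFrom_univ hγ0 hγ1 hγk' hY hno
  have h32 : (Y₀ ⊆ X₀ ∨ ∃ i, (P i).1 ⊆ X₀ ∧ X₀ ∪ Y₀ ⊆ (P i).1 ∪ (P i).2) →
      ∃ i : Fin k, entailsFrom γ P {i} X₀ Y₀
    | .inl h => ⟨⟨0, hk⟩, fun D _ => satPI_of_subset hγ1.le D h⟩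
    | .inr ⟨i, hX, hXY⟩ => ⟨i, fun D hD => (hD i (mem_singleton_self i)).mono hγ0.le hX hXY⟩
  have h21 : (∃ i : Fin k, entailsFrom γ P {i} X₀ Y₀) → entailsFrom γ P univ X₀ Y₀ :=
    fun ⟨i, hi⟩ => hi.mono (subset_univ _)
  exact ⟨⟨h32 ∘ h13, h21⟩, ⟨h13, h21 ∘ h32⟩⟩
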